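/- Let A = (a_1, a_2) be a real-valued pinwheel instance whose two periods take two distinct real values (each ≥ 1). If the density D(A) = 1/a_1 + 1/a_2 is at most 5/6, then A is schedulable. -/
import Mathlib


/-- A schedule `S : ℤ → Fin k` is valid for the real-valued pinwheel instance
`a : Fin k → ℝ` if for every task `i`, every positive integer `l`, and every
integer `m`, task `i` is performed at least `l` times on the days
`t ∈ [m, m + ⌈l * a i⌉)`. -/
def PinValid {k : ℕ} (a : Fin k → ℝ) (S : ℤ → Fin k) : Prop :=
  ∀ i : Fin k, ∀ l : ℕ, 0 < l → ∀ m : ℤ,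
    (l : ℕ) ≤ ((Finset.Ico m (m + ⌈(l : ℝ) * a i⌉)).filter (fun t => S t = i)).card

/-- A real-valued pinwheel instance is schedulable if some schedule is valid for it. -/
def PinSchedulable {k : ℕ} (a : Fin k → ℝ) : Prop := ∃ S : ℤ → Fin k, PinValid a S

namespace PinAux

noncomputable def g (b : ℝ) (t : ℤ) : ℤ := ⌈(t : ℝ) / b⌉

noncomputable def S (b : ℝ) (t : ℤ) : Fin 2 := if g b (t+1) = g b t then 0 else 1

variable (b : ℝ)

lemma g_mono (hb : 0 < b) {s t : ℤ} (h : s ≤ t) : g b s ≤ g b t := by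
  apply Int.ceil_le_ceil
  have : (s:ℝ) ≤ (t:ℝ) := by exact_mod_cast h
  gcongr


lemma g_step (hb : 1 ≤ b) (t : ℤ) : g b (t+1) ≤ g b t + 1 := by
  have hb0 : (0:ℝ) < b := lt_of_lt_of_le one_pos hb
  rw [g, Int.ceil_le]
  push_cast
  rw [add_div]
  have h1 : (1:ℝ)/b ≤ 1 := by rw [div_le_one hb0]; exact hb
  have h2 : (t:ℝ)/b ≤ ⌈(t:ℝ)/b⌉ := Int.le_ceil _
  calc (t:ℝ)/b + 1/b ≤ ⌈(t:ℝ)/b⌉ + 1 := add_le_add h2 h1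
  _ = _ := by norm_num [g]

lemma ite_val (hb : 1 ≤ b) (t : ℤ) :
    (if S b t = (1 : Fin 2) then (1:ℤ) else 0) = g b (t+1) - g b t := by
  have hb0 : (0:ℝ) < b := lt_of_lt_of_le one_pos hb
  have hm : g b t ≤ g b (t+1) := g_mono b hb0 (by omega)
  have hs := g_step b hb t
  by_cases h : g b (t+1) = g b t <;> simp [S, h] <;> omega

lemma count_eq (hb : 1 ≤ b) (m : ℤ) (n : ℕ) :
    (((Finset.Ico m (m + (n:ℤ))).filter (fun t => S b t = 1)).card : ℤ)
      = g b (m + n) - g b m := by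
  induction n with
  | zero => simp
  | succ n ih =>
    have h1 : (m + ((n:ℕ)+1:ℕ) : ℤ) = (m + n) + 1 := by push_cast; ring
    have h2 : Finset.Ico m (m + ((n+1:ℕ):ℤ)) = insert (m + n) (Finset.Ico m (m + n)) := by
      ext x
      simp only [Finset.mem_Ico, Finset.mem_insert]
      push_cast
      omega
    rw [h1] at *
    rw [h2, Finset.filter_insert]
    have := ite_val b hb (m + n)
    by_cases h : S b (m + n) = 1
    · rw [if_pos h, Finset.card_insert_of_notMem (by simp)]
      rw [if_pos h] at this
      push_cast
      omega
    · rw [if_neg h]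
      rw [if_neg h] at this
      omega

lemma count_zero_eq (hb : 1 ≤ b) (m : ℤ) (n : ℕ) :
    (((Finset.Ico m (m + (n:ℤ))).filter (fun t => S b t = 0)).card : ℤ)
      = n - (g b (m + n) - g b m) := by
  have key := count_eq b hb m n
  have hsplit := Finset.card_filter_add_card_filter_not
    (s := Finset.Ico m (m + (n:ℤ))) (p := fun t => S b t = 1)
  have hcongr : (Finset.Ico m (m + (n:ℤ))).filter (fun t => ¬ S b t = 1)
      = (Finset.Ico m (m + (n:ℤ))).filter (fun t => S b t = 0) := by
    apply Finset.filter_congr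
    intro x _
    by_cases hh : g b (x+1) = g b x <;> simp [S, hh]
  rw [hcongr] at hsplit
  have hcard : (Finset.Ico m (m + (n:ℤ))).card = n := by
    rw [Int.card_Ico]; simp
  omega

end PinAux

theorem real_pinwheel_two_distinct_values
    (a₁ a₂ : ℝ) (h₁ : 1 ≤ a₁) (h₂ : 1 ≤ a₂) (hd : a₁ ≠ a₂)
    (hdens : 1 / a₁ + 1 / a₂ ≤ 5 / 6) :
    PinSchedulable ![a₁, a₂] := by
  have ha1 : (0:ℝ) < a₁ := lt_of_lt_of_le one_pos h₁
  have ha2 : (0:ℝ) < a₂ := lt_of_lt_of_le one_pos h₂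
  have hdens' : a₁ + a₂ ≤ a₁ * a₂ := by
    rw [div_add_div _ _ ha1.ne' ha2.ne',
      div_le_div_iff₀ (mul_pos ha1 ha2) (by norm_num)] at hdens
    nlinarith [mul_pos ha1 ha2]
  refine ⟨PinAux.S a₂, ?_⟩
  intro i l hl m
  have hl1 : (1:ℝ) ≤ (l:ℝ) := by exact_mod_cast hl
  fin_cases i
  · -- task 0 : period a₁, scheduled on non-jump days
    simp only [Matrix.cons_val_zero]
    set L : ℤ := ⌈(l:ℝ) * a₁⌉ with hLdef
    have hLl : (l:ℝ) * a₁ ≤ (L:ℝ) := Int.le_ceil _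
    have hLpos : 0 < L := Int.ceil_pos.mpr (by positivity)
    have hn : ((L.toNat : ℤ)) = L := Int.toNat_of_nonneg hLpos.le
    have hz := PinAux.count_zero_eq a₂ h₂ m L.toNat
    rw [hn] at hz
    -- real inequality: L / a₂ ≤ L - l
    have hreal : (L:ℝ) / a₂ ≤ (L:ℝ) - (l:ℝ) := by
      rw [div_le_iff₀ ha2]
      nlinarith [mul_le_mul_of_nonneg_right hLl (by linarith : (0:ℝ) ≤ a₂ - 1),
        mul_nonneg (by linarith : (0:ℝ) ≤ (l:ℝ)) (by linarith : (0:ℝ) ≤ a₁ * a₂ - a₁ - a₂)]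
    have hgub : PinAux.g a₂ (m + L) - PinAux.g a₂ m ≤ L - (l:ℤ) := by
      have hceil : PinAux.g a₂ (m + L) ≤ PinAux.g a₂ m + (L - (l:ℤ)) := by
        rw [PinAux.g, Int.ceil_le]
        push_cast
        rw [add_div]
        have h2' : (m:ℝ)/a₂ ≤ ⌈(m:ℝ)/a₂⌉ := Int.le_ceil _
        have : ((⌈(m:ℝ)/a₂⌉ : ℝ)) = ((PinAux.g a₂ m : ℤ) : ℝ) := by rw [PinAux.g]
        rw [this] at h2'
        linarith
      omega
    have hcard : (l:ℤ) ≤ (((Finset.Ico m (m + L)).filter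
        (fun t => PinAux.S a₂ t = 0)).card : ℤ) := by
      rw [hz]
      omega
    exact_mod_cast hcard
  · -- task 1 : period a₂, scheduled on jump days
    simp only [Matrix.cons_val_one, Matrix.head_cons]
    set L : ℤ := ⌈(l:ℝ) * a₂⌉ with hLdef
    have hLl : (l:ℝ) * a₂ ≤ (L:ℝ) := Int.le_ceil _
    have hLpos : 0 < L := Int.ceil_pos.mpr (by positivity)
    have hn : ((L.toNat : ℤ)) = L := Int.toNat_of_nonneg hLpos.le
    have hz := PinAux.count_eq a₂ h₂ m L.toNat
    rw [hn] at hz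
    have hglb : PinAux.g a₂ m + (l:ℤ) ≤ PinAux.g a₂ (m + L) := by
      have h1 : PinAux.g a₂ m + (l:ℤ) = ⌈(m:ℝ)/a₂ + (l:ℤ)⌉ := by
        rw [Int.ceil_add_intCast, PinAux.g]
      rw [h1]
      apply Int.ceil_le_ceil
      push_cast
      rw [add_div]
      have : (l:ℝ) ≤ (L:ℝ)/a₂ := by
        rw [le_div_iff₀ ha2]
        linarith
      linarith
    have hcard : (l:ℤ) ≤ (((Finset.Ico m (m + L)).filter
        (fun t => PinAux.S a₂ t = 1)).card : ℤ) := by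
      rw [hz]
      omega
    exact_mod_cast hcard
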